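/- Let G be a finite simple graph with n vertices and m edges, without isolated vertices, and let κ = η(G) be its nullity. Then E(G) = sqrt( 2m + (n−κ)(n−κ−1)·|Υ_{n−κ}(G)|^{2/(n−κ)} ) holds if and only if all nonzero eigenvalues of G have the same absolute value. -/

import Mathlib

/-!
The eigenvalues `λᵢ` of a graph satisfy `∑ λᵢ = tr A = 0` and `∑ λᵢ² = tr A² = 2m`. Squaring the
energy gives `E² = 2m + ∑_{i ≠ j} |λᵢ| |λⱼ|`, the sum running over the `p(p-1)` ordered pairs of
distinct indices with `λᵢ, λⱼ ≠ 0`, where `p = n - κ`. The product of these `p(p-1)` terms is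
`|Υ_p|^{2(p-1)}`, so by AM-GM the sum is at least `p(p-1)|Υ_p|^{2/p}`, with equality iff all the
products `|λᵢ| |λⱼ|` coincide. For `p ≥ 3` this forces all `|λᵢ|` to be equal by cancelling a third
factor; for `p = 2` the two nonzero eigenvalues are opposite because their sum is the trace.
-/

open Finset

/-- The adjacency matrix of a simple graph, as a real matrix, is Hermitian. -/
lemma SimpleGraph.adjMatrix_isHermitian {V : Type*} [Fintype V]
    (G : SimpleGraph V) [DecidableRel G.Adj] : (G.adjMatrix ℝ).IsHermitian := by
  unfold Matrix.IsHermitian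
  ext i j
  simp [Matrix.conjTranspose_apply, SimpleGraph.adj_comm]

/-- The energy of a graph: the sum of the absolute values of the eigenvalues of
its adjacency matrix. -/
noncomputable def SimpleGraph.energy {n : ℕ} (G : SimpleGraph (Fin n))
    [DecidableRel G.Adj] : ℝ :=
  ∑ i, |(G.adjMatrix_isHermitian).eigenvalues i|

/-- The nullity of a graph: the multiplicity of `0` as an eigenvalue of its
adjacency matrix. -/
noncomputable def SimpleGraph.nullity {n : ℕ} (G : SimpleGraph (Fin n))
    [DecidableRel G.Adj] : ℕ :=
  (Finset.univ.filter fun i => (G.adjMatrix_isHermitian).eigenvalues i = 0).card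

/-- `Υ_{n-κ}(G)`: the product of the nonzero eigenvalues of `G`, i.e. the
`(n-κ)`-th elementary symmetric function of the eigenvalues when `κ` is the
nullity of `G`. -/
noncomputable def SimpleGraph.prodNonzeroEig {n : ℕ} (G : SimpleGraph (Fin n))
    [DecidableRel G.Adj] : ℝ :=
  ∏ i ∈ Finset.univ.filter
      (fun i => (G.adjMatrix_isHermitian).eigenvalues i ≠ 0),
    (G.adjMatrix_isHermitian).eigenvalues i

namespace Finset

variable {ι : Type*} (s : Finset ι)

theorem cast_card_offDiag {R : Type*} [Ring R] : (#s.offDiag : R) = #s * (#s - 1) := by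
  rw [offDiag_card, Nat.cast_sub (Nat.le_mul_self _), Nat.cast_mul, mul_sub_one]

variable [DecidableEq ι]

theorem sq_sum_eq_sum_sq_add_sum_offDiag {R : Type*} [CommSemiring R] (f : ι → R) :
    (∑ i ∈ s, f i) ^ 2 = ∑ i ∈ s, f i ^ 2 + ∑ x ∈ s.offDiag, f x.1 * f x.2 := by
  rw [sq, sum_mul_sum, ← sum_product', ← diag_union_offDiag, sum_union (disjoint_diag_offDiag s),
    sum_diag]
  simp only [sq]

theorem offDiag_eq_filter_product : s.offDiag = {x ∈ s ×ˢ s | x.1 ≠ x.2} := by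
  ext
  simp [and_assoc]

section CommMonoid

variable {M : Type*} [CommMonoid M] (f : ι → M)

theorem prod_offDiag_fst : ∏ x ∈ s.offDiag, f x.1 = (∏ i ∈ s, f i) ^ (#s - 1) := by
  rw [offDiag_eq_filter_product, prod_filter, prod_product, ← prod_pow]
  refine prod_congr rfl fun i hi => ?_
  rw [← prod_filter, filter_ne, ← card_erase_of_mem hi]
  exact prod_const (f i)

theorem prod_offDiag_snd : ∏ x ∈ s.offDiag, f x.2 = (∏ i ∈ s, f i) ^ (#s - 1) := by
  rw [← prod_offDiag_fst]
  exact prod_nbij' Prod.swap Prod.swap (by grind) (by grind) (by simp) (by simp) (by simp)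

theorem prod_offDiag_mul :
    ∏ x ∈ s.offDiag, f x.1 * f x.2 = (∏ i ∈ s, f i) ^ (2 * (#s - 1)) := by
  rw [prod_mul_distrib, prod_offDiag_fst, prod_offDiag_snd, two_mul, pow_add]

end CommMonoid

theorem card_offDiag_mul_prod_offDiag_rpow_inv {a : ι → ℝ} (ha : ∀ i ∈ s, 0 ≤ a i) :
    #s.offDiag * (∏ x ∈ s.offDiag, a x.1 * a x.2) ^ (#s.offDiag : ℝ)⁻¹ =
      #s * (#s - 1) * (∏ i ∈ s, a i) ^ (2 / #s : ℝ) := by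
  rw [cast_card_offDiag]
  rcases eq_or_ne (#s * (#s - 1) : ℝ) 0 with hp | hp
  · rw [hp, zero_mul, zero_mul]
  have hs : 1 ≤ #s := Nat.one_le_iff_ne_zero.2 (by exact_mod_cast left_ne_zero_of_mul hp)
  have hs1 : (#s - 1 : ℝ) ≠ 0 := right_ne_zero_of_mul hp
  rw [prod_offDiag_mul, ← Real.rpow_natCast, ← Real.rpow_mul (prod_nonneg ha)]
  congr 2
  push_cast [hs]
  field_simp

end Finset

theorem Real.card_mul_prod_rpow_inv_card_eq_sum_iff {ι : Type*} (s : Finset ι) {z : ι → ℝ}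
    (hz : ∀ i ∈ s, 0 ≤ z i) :
    #s * (∏ i ∈ s, z i) ^ (#s : ℝ)⁻¹ = ∑ i ∈ s, z i ↔ ∀ i ∈ s, ∀ j ∈ s, z i = z j := by
  obtain rfl | hs := s.eq_empty_or_nonempty
  · simp
  have hcard : (#s : ℝ) ≠ 0 := by exact_mod_cast hs.card_pos.ne'
  have amgm := Real.geom_mean_eq_arith_mean_weighted_iff_of_pos s (fun _ => (#s : ℝ)⁻¹) z
    (fun _ _ => by positivity) (by simp [hcard]) hz
  rw [Real.finsetProd_rpow s z hz, ← mul_sum] at amgm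
  rw [← amgm, inv_mul_eq_div, eq_div_iff hcard, mul_comm]

section SumZero

variable {ι : Type*} [Fintype ι] [DecidableEq ι] {μ : ι → ℝ}

theorem abs_eq_abs_of_sum_eq_zero_of_forall_offDiag (hμ : ∑ i, μ i = 0)
    (hoff : ∀ x ∈ ({i | μ i ≠ 0} : Finset ι).offDiag, ∀ y ∈ ({i | μ i ≠ 0} : Finset ι).offDiag,
      |μ x.1| * |μ x.2| = |μ y.1| * |μ y.2|)
    {i j : ι} (hi : μ i ≠ 0) (hj : μ j ≠ 0) : |μ i| = |μ j| := by
  rcases eq_or_ne i j with rfl | hij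
  · rfl
  by_cases! hk : ∃ k, μ k ≠ 0 ∧ k ≠ i ∧ k ≠ j
  · obtain ⟨k, hk, hki, hkj⟩ := hk
    have := hoff (i, k) (by simp [hi, hk, hki.symm]) (j, k) (by simp [hj, hk, hkj.symm])
    exact mul_right_cancel₀ (abs_ne_zero.2 hk) this
  · rw [Fintype.sum_eq_add i j hij fun k hk' => by by_contra h; exact hk'.2 (hk k h hk'.1)] at hμ
    rw [eq_neg_of_add_eq_zero_left hμ, abs_neg]

theorem sum_abs_eq_sqrt_iff (hμ : ∑ i, μ i = 0) :
    ∑ i, |μ i| = √(∑ i, μ i ^ 2 + (#{i | μ i ≠ 0} : ℝ) * (#{i | μ i ≠ 0} - 1) *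
        |∏ i ∈ {i | μ i ≠ 0}, μ i| ^ (2 / #{i | μ i ≠ 0} : ℝ)) ↔
      ∀ i j, μ i ≠ 0 → μ j ≠ 0 → |μ i| = |μ j| := by
  set S : Finset ι := {i | μ i ≠ 0}
  have hsum_abs : ∑ i, |μ i| = ∑ i ∈ S, |μ i| :=
    (sum_subset (subset_univ S) fun i _ hi => by simpa [S] using hi).symm
  have hsum_sq : ∑ i, μ i ^ 2 = ∑ i ∈ S, |μ i| ^ 2 :=
    (sum_subset (subset_univ S) fun i _ hi => by simp_all [S]).symm.trans (by simp)
  have hoff_nonneg : ∀ x ∈ S.offDiag, 0 ≤ |μ x.1| * |μ x.2| := fun _ _ => by positivity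
  -- `E = √X ↔ E² = X ↔ ∑_{i ≠ j} |μᵢ| |μⱼ| = p(p-1) · (∏_{i ≠ j} |μᵢ| |μⱼ|)^{1/(p(p-1))}`,
  -- which is the equality case of AM-GM
  rw [abs_prod, ← card_offDiag_mul_prod_offDiag_rpow_inv S (fun i _ => abs_nonneg (μ i)),
    hsum_abs, hsum_sq, eq_comm, Real.sqrt_eq_iff_eq_sq (by positivity) (by positivity), eq_comm,
    sq_sum_eq_sum_sq_add_sum_offDiag, add_right_inj, eq_comm,
    Real.card_mul_prod_rpow_inv_card_eq_sum_iff _ hoff_nonneg]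
  refine ⟨fun hoff i j hi hj => abs_eq_abs_of_sum_eq_zero_of_forall_offDiag hμ hoff hi hj,
    fun h x hx y hy => ?_⟩
  simp only [S, mem_offDiag, mem_filter, mem_univ, true_and] at hx hy
  rw [h x.1 y.1 hx.1 hy.1, h x.2 y.2 hx.2.1 hy.2.1]

end SumZero

theorem Matrix.IsHermitian.trace_mul_self {𝕜 n : Type*} [RCLike 𝕜] [Fintype n] [DecidableEq n]
    {A : Matrix n n 𝕜} (hA : A.IsHermitian) :
    (A * A).trace = ∑ i, (hA.eigenvalues i : 𝕜) ^ 2 := by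
  conv_lhs => rw [hA.spectral_theorem, ← map_mul, Unitary.conjStarAlgAut_apply, trace_mul_cycle,
    Unitary.coe_star_mul_self, one_mul, diagonal_mul_diagonal, trace_diagonal]
  simp [sq]

namespace SimpleGraph

section Spectrum

variable {V : Type*} [Fintype V] [DecidableEq V] (G : SimpleGraph V) [DecidableRel G.Adj]

theorem sum_eigenvalues_adjMatrix : ∑ i, G.adjMatrix_isHermitian.eigenvalues i = 0 := by
  simpa using G.adjMatrix_isHermitian.trace_eq_sum_eigenvalues.symm.trans
    (G.trace_adjMatrix (α := ℝ))

theorem sum_sq_eigenvalues_adjMatrix :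
    ∑ i, G.adjMatrix_isHermitian.eigenvalues i ^ 2 = 2 * #G.edgeFinset := by
  have h := G.adjMatrix_isHermitian.trace_mul_self
  simp only [RCLike.ofReal_real_eq_id, id, Matrix.trace, Matrix.diag,
    adjMatrix_mul_self_apply_self] at h
  rw [← h]
  exact_mod_cast G.sum_degrees_eq_twice_card_edges

end Spectrum

theorem nullity_add_card_eigenvalues_ne_zero {n : ℕ} (G : SimpleGraph (Fin n))
    [DecidableRel G.Adj] :
    G.nullity + #{i | G.adjMatrix_isHermitian.eigenvalues i ≠ 0} = n := by
  rw [nullity, card_filter_add_card_filter_not, card_univ, Fintype.card_fin]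

end SimpleGraph

theorem graph_energy_eq_mcclelland_bound_iff_general {n : ℕ} (G : SimpleGraph (Fin n))
    [DecidableRel G.Adj] (m : ℕ) (hm : m = G.edgeFinset.card)
    (κ : ℕ) (hκ : κ = G.nullity) :
    G.energy =
      Real.sqrt (2 * m +
        ((n : ℝ) - κ) * ((n : ℝ) - κ - 1) *
          |G.prodNonzeroEig| ^ ((2 : ℝ) / ((n : ℝ) - κ))) ↔
    ∀ i j, (G.adjMatrix_isHermitian).eigenvalues i ≠ 0 →
      (G.adjMatrix_isHermitian).eigenvalues j ≠ 0 →
      |(G.adjMatrix_isHermitian).eigenvalues i| =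
        |(G.adjMatrix_isHermitian).eigenvalues j| := by
  subst hm hκ
  have hrank : (n : ℝ) - G.nullity = #{i | G.adjMatrix_isHermitian.eigenvalues i ≠ 0} := by
    rw [eq_comm, eq_sub_iff_add_eq']
    exact_mod_cast G.nullity_add_card_eigenvalues_ne_zero
  rw [SimpleGraph.energy, SimpleGraph.prodNonzeroEig, hrank, ← G.sum_sq_eigenvalues_adjMatrix]
  exact sum_abs_eq_sqrt_iff G.sum_eigenvalues_adjMatrix

theorem graph_energy_eq_mcclelland_bound_iff {n : ℕ} (G : SimpleGraph (Fin n))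
    [DecidableRel G.Adj] (m : ℕ) (hm : m = G.edgeFinset.card)
    (hiso : ∀ v, 0 < G.degree v)
    (κ : ℕ) (hκ : κ = G.nullity) :
    G.energy =
      Real.sqrt (2 * m +
        ((n : ℝ) - κ) * ((n : ℝ) - κ - 1) *
          |G.prodNonzeroEig| ^ ((2 : ℝ) / ((n : ℝ) - κ))) ↔
    ∀ i j, (G.adjMatrix_isHermitian).eigenvalues i ≠ 0 →
      (G.adjMatrix_isHermitian).eigenvalues j ≠ 0 →
      |(G.adjMatrix_isHermitian).eigenvalues i| =
        |(G.adjMatrix_isHermitian).eigenvalues j| :=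
  graph_energy_eq_mcclelland_bound_iff_general G m hm κ hκ
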